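/- arXiv:1412.2894 — 2 statements merged into one kernel-verified Lean document; each statement's English description precedes it below -/
import Mathlib

section
/- Let G be a finite graph, S a subset of its vertices, and ℓ ≥ 1 an integer. Let H be a frame in G, let X ⊆ V(H) be a wide set containing all branch vertices of H, and let P be an H-path of G − X whose two endvertices lie in two distinct connected components of H − X. If every cycle of H ∪ P that passes through P is an S-cycle, then H ∪ P is again a frame, and H ∪ P has strictly more branch vertices than H. -/
/-- A set `X ⊆ V(H)` is *wide* if every path in `H` whose first and last vertices
lie in `H − X` and which contains a vertex of `X` has length at least `ℓ`. -/
def IsWide {V : Type*} {G : SimpleGraph V} (ℓ : ℕ) (H : G.Subgraph) (X : Set V) : Prop :=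
  X ⊆ H.verts ∧
  ∀ (a b : V) (p : G.Walk a b), p.IsPath → (∀ e ∈ p.edges, e ∈ H.edgeSet) →
    a ∈ H.verts \ X → b ∈ H.verts \ X → (∃ x ∈ X, x ∈ p.support) → ℓ ≤ p.length

/-- A subgraph `H` of `G` is a *frame* (for `S` and `ℓ`) if every vertex of `H` has
degree `2` or `3` in `H`, and every cycle contained in `H` is a long `S`-cycle. -/
def IsFrame {V : Type*} {G : SimpleGraph V} (S : Set V) (ℓ : ℕ) (H : G.Subgraph) : Prop :=
  (∀ v ∈ H.verts, (H.neighborSet v).ncard = 2 ∨ (H.neighborSet v).ncard = 3) ∧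
  (∀ (v : V) (c : G.Walk v v), c.IsCycle → (∀ e ∈ c.edges, e ∈ H.edgeSet) →
    ℓ ≤ c.length ∧ ∃ s ∈ S, s ∈ c.support)

/-!
The ends `a`, `b` of `P` are not in `X`, hence not branch vertices of `H`: they have degree 2 in `H`
and gain one edge of `P`, while the inner vertices of `P` get degree 2 and no other degree changes.
So `a` becomes a new branch vertex, and the old branch vertices, lying in `X`, are untouched by `P`.

A cycle of `H ∪ P` avoiding the edges of `P` lies in `H`. A cycle `C` through an edge of `P`
contains all of `P`, since the inner vertices of `P` have no other edges; so `C` is `P` followed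
by a `b`–`a` walk in `H`. That walk joins two components of `H - X`, so it meets `X`, and as `X`
is wide it is already of length at least `ℓ`.
-/

open SimpleGraph

namespace SimpleGraph.Walk

variable {V : Type*} {G : SimpleGraph V}

lemma IsPath.neighborSet_toSubgraph_cons_snd {a z b : V} {h : G.Adj a z} {p : G.Walk z b}
    (hp : (cons h p).IsPath) (hnil : ¬p.Nil) :
    (cons h p).toSubgraph.neighborSet z = {a, p.snd} := by
  rw [Walk.toSubgraph.eq_2, Subgraph.neighborSet_sup, neighborSet_snd_subgraphOfAdj,
    hp.of_cons.neighborSet_toSubgraph_startpoint hnil, Set.singleton_union]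

lemma IsPath.neighborSet_subset_toSubgraph_of_cons {K : G.Subgraph} {a z b : V}
    {h : G.Adj a z} {p : G.Walk z b} (hp : (cons h p).IsPath)
    (hnbr : ∀ u ∈ (cons h p).support, u ≠ a → u ≠ b →
      K.neighborSet u ⊆ (cons h p).toSubgraph.neighborSet u) :
    ∀ u ∈ p.support, u ≠ z → u ≠ b →
      K.neighborSet u ⊆ p.toSubgraph.neighborSet u := by
  intro u hu huz hub
  have hua : u ≠ a := fun hua => ((cons_isPath_iff h p).1 hp).2 (hua ▸ hu)
  have hnbr_u := hnbr u (List.mem_cons_of_mem a hu) hua hub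
  rwa [Walk.toSubgraph.eq_2, Subgraph.neighborSet_sup,
    neighborSet_subgraphOfAdj_of_ne_of_ne h hua huz, Set.empty_union] at hnbr_u

lemma IsPath.ncard_neighborSet_toSubgraph_of_ne {a b u : V} {p : G.Walk a b} (hp : p.IsPath)
    (hu : u ∈ p.support) (hua : u ≠ a) (hub : u ≠ b) :
    (p.toSubgraph.neighborSet u).ncard = 2 := by
  obtain ⟨i, rfl, hi⟩ := mem_support_iff_exists_getVert.1 hu
  refine hp.ncard_neighborSet_toSubgraph_internal_eq_two (fun h0 => hua ?_) ?_
  · simp [h0]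
  · refine lt_of_le_of_ne hi fun hlen => hub ?_
    simp [hlen]

/-- At an inner vertex of `p` on `c`, the two edges of `c` are the two edges of `p`, so a shared
edge propagates back to the first edge of `p`. -/
lemma IsCycle.mk_start_snd_mem_edges {v a b : V} {c : G.Walk v v} (hc : c.IsCycle)
    {p : G.Walk a b} (hp : p.IsPath)
    (hnbr : ∀ u ∈ p.support, u ≠ a → u ≠ b →
      c.toSubgraph.neighborSet u ⊆ p.toSubgraph.neighborSet u)
    (hshare : ∃ e ∈ p.edges, e ∈ c.edges) : s(a, p.snd) ∈ c.edges := by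
  induction p with
  | nil => simp at hshare
  | @cons a z b h p ih =>
    rw [snd_cons]
    by_contra hfirst
    have hshare' : ∃ e ∈ p.edges, e ∈ c.edges := by
      obtain ⟨e, he, hec⟩ := hshare
      rcases List.mem_cons.1 (edges_cons h p ▸ he) with rfl | he
      · exact absurd hec hfirst
      · exact ⟨e, he, hec⟩
    have hnil : ¬p.Nil := fun hnil => by simp [edges_eq_nil.2 hnil] at hshare'
    have hza : z ≠ a := h.ne'
    have hzb : z ≠ b := fun hzb => hnil ((hp.of_cons.nil_iff_eq).2 hzb)
    have hnext : s(z, p.snd) ∈ c.edges :=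
      ih hp.of_cons (hp.neighborSet_subset_toSubgraph_of_cons hnbr) hshare'
    have hsub : c.toSubgraph.neighborSet z ⊆ {p.snd} := by
      intro w hw
      have hw' := hnbr z (by simp) hza hzb hw
      rw [hp.neighborSet_toSubgraph_cons_snd hnil] at hw'
      rcases hw' with rfl | hw'
      · exact absurd (Sym2.eq_swap ▸ adj_toSubgraph_iff_mem_edges.1 hw) hfirst
      · exact hw'
    have htwo := hc.ncard_neighborSet_toSubgraph_eq_two (fst_mem_support_of_mem_edges c hnext)
    have hle_one := (Set.ncard_le_ncard hsub).trans_eq (Set.ncard_singleton _)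
    omega

lemma IsTrail.exists_eq_append {a b v : V} {c : G.Walk a v} (hc : c.IsTrail)
    {p : G.Walk a b} (hp : p.IsPath) (hv : v ∉ p.support.tail) (hsnd : c.snd = p.snd)
    (hnbr : ∀ u ∈ p.support, u ≠ a → u ≠ b →
      c.toSubgraph.neighborSet u ⊆ p.toSubgraph.neighborSet u) :
    ∃ q : G.Walk b v, c = p.append q := by
  induction p with
  | nil => exact ⟨c, (nil_append c).symm⟩
  | @cons a z b h p ih =>
    cases c with
    | nil => exact absurd (hsnd.trans (snd_cons p h)) h.ne
    | @cons _ z' _ h' c =>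
      obtain rfl : z = z' := by simpa using hsnd.symm
      by_cases hnil : p.Nil
      · obtain rfl := hnil.eq
        obtain rfl := eq_nil_iff_nil.2 hnil
        exact ⟨c, rfl⟩
      have hza : z ≠ a := h.ne'
      have hzb : z ≠ b := fun hzb => hnil ((hp.of_cons.nil_iff_eq).2 hzb)
      have hcnil : ¬c.Nil := fun hcnil => hv (by simp [← hcnil.eq])
      have hcsnd : c.snd = p.snd := by
        have hadj : (cons h' c).toSubgraph.Adj z c.snd :=
          (Subgraph.sup_adj).2 (Or.inr (c.toSubgraph_adj_snd hcnil))
        have hmem := hnbr z (by simp) hza hzb hadj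
        rw [hp.neighborSet_toSubgraph_cons_snd hnil] at hmem
        rcases hmem with hback | hmem
        · have hback_mem := c.mk_start_snd_mem_edges hcnil
          rw [hback, Sym2.eq_swap] at hback_mem
          exact absurd hback_mem ((isTrail_cons h' c).1 hc).2
        · exact hmem
      have hnbr' := hp.neighborSet_subset_toSubgraph_of_cons fun u hu hua hub =>
        (Subgraph.neighborSet_subset_of_subgraph le_sup_right u).trans (hnbr u hu hua hub)
      obtain ⟨q, rfl⟩ :=
        ih hc.of_cons hp.of_cons (fun hvp => hv (List.mem_of_mem_tail hvp)) hcsnd hnbr'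
      exact ⟨q, rfl⟩

lemma IsCycle.exists_isCycle_snd_eq {v u w : V} {c : G.Walk v v} (hc : c.IsCycle)
    (he : s(u, w) ∈ c.edges) :
    ∃ c' : G.Walk u u, c'.IsCycle ∧ c'.snd = w ∧ c'.length = c.length ∧
      c'.toSubgraph = c.toSubgraph := by
  classical
  have hu := fst_mem_support_of_mem_edges c he
  have hw : w ∈ (c.rotate u hu).toSubgraph.neighborSet u := by
    rw [toSubgraph_rotate]
    exact adj_toSubgraph_iff_mem_edges.2 he
  rw [(hc.rotate hu).neighborSet_toSubgraph_endpoint] at hw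
  rcases hw with rfl | rfl
  · exact ⟨c.rotate u hu, hc.rotate hu, rfl, length_rotate .., toSubgraph_rotate ..⟩
  · exact ⟨(c.rotate u hu).reverse, (hc.rotate hu).reverse, snd_reverse _, by simp, by simp⟩

lemma IsPath.not_adj_snd {H : G.Subgraph} {a b : V} {p : G.Walk a b} (hp : p.IsPath)
    (hint : ∀ u ∈ p.support, u ≠ a → u ≠ b → u ∉ H.verts)
    (hedge : ∃ e ∈ p.edges, e ∉ H.edgeSet) : ¬H.Adj a p.snd := by
  intro hadj
  cases p with
  | nil => simp at hedge
  | @cons _ z _ h p =>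
    rw [snd_cons] at hadj
    obtain rfl : z = b := by
      by_contra hzb
      exact hint z (by simp) h.ne' hzb (H.edge_vert hadj.symm)
    obtain rfl := eq_nil_iff_nil.2 (isPath_iff_nil.1 hp.of_cons)
    obtain ⟨e, he, heH⟩ := hedge
    simp only [edges_cons, edges_nil, List.mem_singleton] at he
    exact heH (he ▸ hadj)

end SimpleGraph.Walk

namespace SimpleGraph.Subgraph

open Walk

variable {V : Type*} {G : SimpleGraph V} {H : G.Subgraph} {a b : V} {p : G.Walk a b}

lemma neighborSet_sup_toSubgraph_of_notMem_support {v : V} (hv : v ∉ p.support) :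
    (H ⊔ p.toSubgraph).neighborSet v = H.neighborSet v := by
  rw [neighborSet_sup, Set.union_eq_left]
  exact fun w hw => absurd (mem_support_of_adj_toSubgraph hw) hv

lemma neighborSet_sup_toSubgraph_of_notMem_verts {v : V} (hv : v ∉ H.verts) :
    (H ⊔ p.toSubgraph).neighborSet v = p.toSubgraph.neighborSet v := by
  rw [neighborSet_sup, Set.union_eq_right]
  exact fun w hw => absurd (H.edge_vert hw) hv

lemma ncard_neighborSet_sup_toSubgraph_start [Finite V] (hp : p.IsPath) (hnil : ¬p.Nil)
    (hadj : ¬H.Adj a p.snd) :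
    ((H ⊔ p.toSubgraph).neighborSet a).ncard = (H.neighborSet a).ncard + 1 := by
  rw [neighborSet_sup, hp.neighborSet_toSubgraph_startpoint hnil, Set.union_singleton,
    Set.ncard_insert_of_notMem (show p.snd ∉ H.neighborSet a from hadj)]

lemma reachable_deleteVerts_of_walk {X : Set V} (ha : a ∈ H.verts) (haX : a ∉ X)
    (hb : b ∈ H.verts) (hbX : b ∉ X) (w : G.Walk a b) (hwH : ∀ e ∈ w.edges, e ∈ H.edgeSet)
    (hwX : ∀ u ∈ w.support, u ∉ X) :
    (H.deleteVerts X).coe.Reachable ⟨a, ha, haX⟩ ⟨b, hb, hbX⟩ := by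
  by_cases hnil : w.Nil
  · obtain rfl := hnil.eq
    rfl
  have hle : w.toSubgraph ≤ H := (toSubgraph_le_iff hnil).2 hwH
  have hle' : w.toSubgraph ≤ H.deleteVerts X := by
    refine ⟨fun v hv => ⟨hle.1 hv, hwX v ((mem_verts_toSubgraph w).1 hv)⟩,
      fun u v huv => ?_⟩
    exact deleteVerts_adj.2 ⟨hle.1 (w.toSubgraph.edge_vert huv),
      hwX u (mem_support_of_adj_toSubgraph huv), hle.1 (w.toSubgraph.edge_vert huv.symm),
      hwX v (mem_support_of_adj_toSubgraph huv.symm), hle.2 huv⟩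
  exact (w.toSubgraph_connected ⟨a, w.start_mem_verts_toSubgraph⟩
    ⟨b, w.end_mem_verts_toSubgraph⟩).map (inclusion hle')

end SimpleGraph.Subgraph

section Augmentation

open Walk Subgraph

variable {V : Type*} {G : SimpleGraph V} {S : Set V} {ℓ : ℕ} {H : G.Subgraph} {X : Set V}
  {a b : V}

lemma IsWide.le_length_of_not_reachable (hX : IsWide ℓ H X) (ha : a ∈ H.verts) (haX : a ∉ X)
    (hb : b ∈ H.verts) (hbX : b ∉ X)
    (hsep : ¬(H.deleteVerts X).coe.Reachable ⟨a, ha, haX⟩ ⟨b, hb, hbX⟩)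
    (w : G.Walk a b) (hw : ∀ e ∈ w.edges, e ∈ H.edgeSet) : ℓ ≤ w.length := by
  classical
  have hbypass : ∀ e ∈ w.bypass.edges, e ∈ H.edgeSet :=
    fun e he => hw e (edges_bypass_subset_edges w he)
  by_cases hmeet : ∃ x ∈ X, x ∈ w.bypass.support
  · exact (hX.2 a b _ w.bypass_isPath hbypass ⟨ha, haX⟩ ⟨hb, hbX⟩ hmeet).trans
      w.length_bypass_le_length
  · push Not at hmeet
    exact absurd (reachable_deleteVerts_of_walk ha haX hb hbX _ hbypass
      fun u hu hux => hmeet u hux hu) hsep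

lemma IsFrame.ncard_neighborSet_eq_two (hH : IsFrame S ℓ H)
    (hbranch : ∀ v ∈ H.verts, (H.neighborSet v).ncard = 3 → v ∈ X)
    {v : V} (hv : v ∈ H.verts) (hvX : v ∉ X) : (H.neighborSet v).ncard = 2 :=
  (hH.1 v hv).resolve_right fun h3 => hvX (hbranch v hv h3)

lemma ncard_neighborSet_sup_toSubgraph_start_eq_three [Finite V] {p : G.Walk a b}
    (hp : p.IsPath) (hint : ∀ u ∈ p.support, u ≠ a → u ≠ b → u ∉ H.verts)
    (hedge : ∃ e ∈ p.edges, e ∉ H.edgeSet) (ha : (H.neighborSet a).ncard = 2) :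
    ((H ⊔ p.toSubgraph).neighborSet a).ncard = 3 := by
  have hnil : ¬p.Nil := fun hnil => by simp [edges_eq_nil.2 hnil] at hedge
  rw [ncard_neighborSet_sup_toSubgraph_start hp hnil (hp.not_adj_snd hint hedge), ha]

lemma ncard_neighborSet_sup_toSubgraph_eq_two_or_three [Finite V] {p : G.Walk a b}
    (hp : p.IsPath) (hint : ∀ u ∈ p.support, u ≠ a → u ≠ b → u ∉ H.verts)
    (hedge : ∃ e ∈ p.edges, e ∉ H.edgeSet)
    (hdeg : ∀ v ∈ H.verts, (H.neighborSet v).ncard = 2 ∨ (H.neighborSet v).ncard = 3)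
    (ha : (H.neighborSet a).ncard = 2) (hb : (H.neighborSet b).ncard = 2)
    {v : V} (hv : v ∈ (H ⊔ p.toSubgraph).verts) :
    ((H ⊔ p.toSubgraph).neighborSet v).ncard = 2 ∨
      ((H ⊔ p.toSubgraph).neighborSet v).ncard = 3 := by
  by_cases hvp : v ∈ p.support
  · by_cases hva : v = a
    · subst hva
      exact .inr (ncard_neighborSet_sup_toSubgraph_start_eq_three hp hint hedge ha)
    by_cases hvb : v = b
    · subst hvb
      have hb3 := ncard_neighborSet_sup_toSubgraph_start_eq_three hp.reverse
        (fun u hu hub hua => hint u (by simpa using hu) hua hub) (by simpa using hedge) hb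
      rw [toSubgraph_reverse] at hb3
      exact .inr hb3
    rw [neighborSet_sup_toSubgraph_of_notMem_verts (hint v hvp hva hvb)]
    exact .inl (hp.ncard_neighborSet_toSubgraph_of_ne hvp hva hvb)
  · rw [neighborSet_sup_toSubgraph_of_notMem_support hvp]
    exact hdeg v (hv.resolve_right fun hv => hvp ((mem_verts_toSubgraph p).1 hv))

lemma IsWide.le_length_of_isCycle_sup (hX : IsWide ℓ H X) {p : G.Walk a b} (hp : p.IsPath)
    (ha : a ∈ H.verts) (haX : a ∉ X) (hb : b ∈ H.verts) (hbX : b ∉ X)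
    (hint : ∀ u ∈ p.support, u ≠ a → u ≠ b → u ∉ H.verts)
    (hsep : ¬(H.deleteVerts X).coe.Reachable ⟨a, ha, haX⟩ ⟨b, hb, hbX⟩)
    {v : V} {c : G.Walk v v} (hc : c.IsCycle)
    (hcK : ∀ e ∈ c.edges, e ∈ (H ⊔ p.toSubgraph).edgeSet)
    (hcp : ∃ e ∈ c.edges, e ∈ p.edges) :
    ℓ ≤ c.length := by
  have hnbr : ∀ u ∈ p.support, u ≠ a → u ≠ b →
      c.toSubgraph.neighborSet u ⊆ p.toSubgraph.neighborSet u := by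
    intro u hu hua hub w hw
    rw [← neighborSet_sup_toSubgraph_of_notMem_verts (hint u hu hua hub)]
    exact hcK _ (adj_toSubgraph_iff_mem_edges.1 hw)
  obtain ⟨e, hec, hep⟩ := hcp
  obtain ⟨c', hc', hsnd, hlen, hsub⟩ :=
    hc.exists_isCycle_snd_eq (hc.mk_start_snd_mem_edges hp hnbr ⟨e, hep, hec⟩)
  have ha_tail : a ∉ p.support.tail := by
    have := hp.support_nodup
    rw [← cons_tail_support] at this
    exact (List.nodup_cons.1 this).1
  obtain ⟨q, rfl⟩ := hc'.isTrail.exists_eq_append hp ha_tail hsnd (hsub ▸ hnbr)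
  have hq : ∀ e ∈ q.edges, e ∈ H.edgeSet := by
    intro e he
    have hnodup := hc'.edges_nodup
    rw [edges_append] at hnodup
    have hec : e ∈ c.edges := by
      rw [← mem_edges_toSubgraph, ← hsub, mem_edges_toSubgraph, edges_append]
      exact List.mem_append_right _ he
    have heK := hcK e hec
    rw [Subgraph.edgeSet_sup] at heK
    rcases heK with heH | hep
    · exact heH
    · exact absurd he
        (List.disjoint_of_nodup_append hnodup ((mem_edges_toSubgraph p).1 hep))
  calc ℓ ≤ q.reverse.length :=
        hX.le_length_of_not_reachable ha haX hb hbX hsep q.reverse (by simpa using hq)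
    _ ≤ c.length := by simp [← hlen]

lemma IsFrame.sup_toSubgraph [Finite V] (hH : IsFrame S ℓ H) (hX : IsWide ℓ H X)
    (hbranch : ∀ v ∈ H.verts, (H.neighborSet v).ncard = 3 → v ∈ X)
    {p : G.Walk a b} (hp : p.IsPath)
    (ha : a ∈ H.verts) (haX : a ∉ X) (hb : b ∈ H.verts) (hbX : b ∉ X)
    (hint : ∀ u ∈ p.support, u ≠ a → u ≠ b → u ∉ H.verts)
    (hedge : ∃ e ∈ p.edges, e ∉ H.edgeSet)
    (hsep : ¬(H.deleteVerts X).coe.Reachable ⟨a, ha, haX⟩ ⟨b, hb, hbX⟩)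
    (hScyc : ∀ (v : V) (c : G.Walk v v), c.IsCycle →
      (∀ e ∈ c.edges, e ∈ (H ⊔ p.toSubgraph).edgeSet) →
      (∃ e ∈ c.edges, e ∈ p.edges) → ∃ s ∈ S, s ∈ c.support) :
    IsFrame S ℓ (H ⊔ p.toSubgraph) := by
  refine ⟨fun v hv => ncard_neighborSet_sup_toSubgraph_eq_two_or_three hp hint hedge hH.1
    (hH.ncard_neighborSet_eq_two hbranch ha haX) (hH.ncard_neighborSet_eq_two hbranch hb hbX) hv,
    fun v c hc hcK => ?_⟩
  by_cases hcp : ∃ e ∈ c.edges, e ∈ p.edges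
  · exact ⟨hX.le_length_of_isCycle_sup hp ha haX hb hbX hint hsep hc hcK hcp,
      hScyc v c hc hcK hcp⟩
  refine hH.2 v c hc fun e he => ?_
  have heK := hcK e he
  rw [Subgraph.edgeSet_sup] at heK
  exact heK.resolve_right fun hep => hcp ⟨e, he, (mem_edges_toSubgraph p).1 hep⟩

end Augmentation

theorem frame_augmentation_general {V : Type*} [Fintype V] {G : SimpleGraph V}
    (S : Set V) (ℓ : ℕ) (H : G.Subgraph) (hH : IsFrame S ℓ H)
    (X : Set V) (hX : IsWide ℓ H X)
    (hbranch : ∀ v ∈ H.verts, (H.neighborSet v).ncard = 3 → v ∈ X)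
    {a b : V} (p : G.Walk a b) (hp : p.IsPath)
    (ha : a ∈ H.verts) (haX : a ∉ X) (hb : b ∈ H.verts) (hbX : b ∉ X)
    (hint : ∀ u ∈ p.support, u ≠ a → u ≠ b → u ∉ H.verts)
    (hedge : ∃ e ∈ p.edges, e ∉ H.edgeSet)
    (havoid : ∀ u ∈ p.support, u ∉ X)
    (hsep : ¬ (H.deleteVerts X).coe.Reachable ⟨a, ha, haX⟩ ⟨b, hb, hbX⟩)
    (hScyc : ∀ (v : V) (c : G.Walk v v), c.IsCycle →
      (∀ e ∈ c.edges, e ∈ (H ⊔ p.toSubgraph).edgeSet) →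
      (∃ e ∈ c.edges, e ∈ p.edges) → ∃ s ∈ S, s ∈ c.support) :
    IsFrame S ℓ (H ⊔ p.toSubgraph) ∧
    {v : V | (H.neighborSet v).ncard = 3}.ncard <
      {v : V | ((H ⊔ p.toSubgraph).neighborSet v).ncard = 3}.ncard := by
  have ha2 := hH.ncard_neighborSet_eq_two hbranch ha haX
  refine ⟨hH.sup_toSubgraph hX hbranch hp ha haX hb hbX hint hedge hsep hScyc,
    Set.ncard_lt_ncard ((Set.ssubset_iff_of_subset fun v hv => ?_).2 ⟨a, ?_, ?_⟩)⟩
  · have hv3 : (H.neighborSet v).ncard = 3 := hv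
    obtain ⟨w, hw⟩ := Set.nonempty_of_ncard_ne_zero (hv3.trans_ne three_ne_zero)
    have hvp : v ∉ p.support := fun hvp => havoid v hvp (hbranch v (H.edge_vert hw) hv3)
    show _ = 3
    rwa [Subgraph.neighborSet_sup_toSubgraph_of_notMem_support hvp]
  · exact ncard_neighborSet_sup_toSubgraph_start_eq_three hp hint hedge ha2
  · simp [ha2]

/-- **Augmentation lemma.** Let `H` be a frame, `X ⊆ V(H)` wide and containing all
branch vertices of `H`, and let `P` be an `H`-path of `G − X` linking two distinct
components of `H − X`. If every cycle of `H ∪ P` passing through `P` is an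
`S`-cycle, then `H ∪ P` is again a frame with strictly more branch vertices. -/
theorem frame_augmentation {V : Type*} [Fintype V] {G : SimpleGraph V}
    (S : Set V) (ℓ : ℕ) (hℓ : 1 ≤ ℓ) (H : G.Subgraph) (hH : IsFrame S ℓ H)
    (X : Set V) (hX : IsWide ℓ H X)
    (hbranch : ∀ v ∈ H.verts, (H.neighborSet v).ncard = 3 → v ∈ X)
    {a b : V} (p : G.Walk a b) (hp : p.IsPath)
    (ha : a ∈ H.verts) (haX : a ∉ X) (hb : b ∈ H.verts) (hbX : b ∉ X)
    (hint : ∀ u ∈ p.support, u ≠ a → u ≠ b → u ∉ H.verts)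
    (hedge : ∃ e ∈ p.edges, e ∉ H.edgeSet)
    (havoid : ∀ u ∈ p.support, u ∉ X)
    (hsep : ¬ (H.deleteVerts X).coe.Reachable ⟨a, ha, haX⟩ ⟨b, hb, hbX⟩)
    (hScyc : ∀ (v : V) (c : G.Walk v v), c.IsCycle →
      (∀ e ∈ c.edges, e ∈ (H ⊔ p.toSubgraph).edgeSet) →
      (∃ e ∈ c.edges, e ∈ p.edges) → ∃ s ∈ S, s ∈ c.support) :
    IsFrame S ℓ (H ⊔ p.toSubgraph) ∧
    {v : V | (H.neighborSet v).ncard = 3}.ncard <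
      {v : V | ((H ⊔ p.toSubgraph).neighborSet v).ncard = 3}.ncard :=
  frame_augmentation_general S ℓ H hH X hX hbranch p hp ha haX hb hbX hint hedge havoid hsep hScyc
end

section
/- Let G be a finite graph and ℓ ≥ 1 an integer. Let H be a subgraph of G, let X ⊆ V(H) be a wide set, and let P be an H-path of G − X whose two endvertices lie in two distinct connected components of H − X. Then every cycle of H ∪ P that uses an edge of P has length at least ℓ. -/
namespace SimpleGraph

variable {V : Type*} {G : SimpleGraph V}

namespace Walk

theorem exists_eq_append_cons_of_mem_edges {u v : V} (p : G.Walk u v) {e : Sym2 V}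
    (he : e ∈ p.edges) :
    ∃ (x y : V) (pre : G.Walk u x) (h : G.Adj x y) (post : G.Walk y v),
      p = pre.append (cons h post) ∧ e = s(x, y) := by
  induction p with
  | nil => simp at he
  | cons h p ih =>
    rcases List.mem_cons.mp he with rfl | he
    · exact ⟨_, _, nil, h, p, rfl, rfl⟩
    · obtain ⟨x, y, pre, hxy, post, rfl, rfl⟩ := ih he
      exact ⟨x, y, cons h pre, hxy, post, rfl, rfl⟩

theorem support_append_cons {u x y v : V} (pre : G.Walk u x) (h : G.Adj x y)
    (post : G.Walk y v) : (pre.append (cons h post)).support = pre.support ++ post.support := by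
  simp [support_append]

theorem edges_append_cons {u x y v : V} (pre : G.Walk u x) (h : G.Adj x y)
    (post : G.Walk y v) :
    (pre.append (cons h post)).edges = pre.edges ++ s(x, y) :: post.edges := by
  simp [edges_append]

theorem IsPath.disjoint_support_of_append_cons {u x y v : V} {pre : G.Walk u x}
    {h : G.Adj x y} {post : G.Walk y v} (hp : (pre.append (cons h post)).IsPath) :
    ∀ w ∈ pre.support, w ∉ post.support := by
  have hnd := hp.support_nodup
  rw [support_append_cons, List.nodup_append] at hnd
  exact fun w hw hw' => hnd.2.2 w hw w hw' rfl

theorem IsTrail.length_le_of_edges_subset {u v u' v' : V} {q : G.Walk u v} (hq : q.IsTrail)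
    {c : G.Walk u' v'} (h : ∀ e ∈ q.edges, e ∈ c.edges) : q.length ≤ c.length := by
  simpa only [length_edges] using (hq.edges_nodup.subperm h).length_le

theorem mem_edgeSet_deleteVerts_of_mem_edges {H : G.Subgraph} {X : Set V} {u w : V}
    {q : G.Walk u w} (hqX : ∀ z ∈ q.support, z ∉ X) {e : Sym2 V} (he : e ∈ q.edges)
    (heH : e ∈ H.edgeSet) : e ∈ (H.deleteVerts X).edgeSet := by
  induction e using Sym2.ind with
  | _ u' w' =>
    exact Subgraph.deleteVerts_adj.mpr ⟨H.edge_vert heH,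
      hqX u' (q.fst_mem_support_of_mem_edges he), H.edge_vert (H.adj_symm heH),
      hqX w' (q.snd_mem_support_of_mem_edges he), heH⟩

theorem exists_boundary_dart_of_mem_support {v x y : V} (c : G.Walk v v) {S : Set V}
    (hx : x ∈ c.support) (hxS : x ∈ S) (hy : y ∈ c.support) (hyS : y ∉ S) :
    ∃ d ∈ c.darts, d.fst ∈ S ∧ d.snd ∉ S := by
  classical
  by_cases hv : v ∈ S
  · obtain ⟨d, hd, hdS⟩ := (c.takeUntil y hy).exists_boundary_dart S hv hyS
    exact ⟨d, c.darts_takeUntil_subset_darts hy hd, hdS⟩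
  · obtain ⟨d, hd, hdS⟩ := (c.dropUntil x hx).exists_boundary_dart S hxS hv
    exact ⟨d, c.darts_dropUntil_subset_darts hx hd, hdS⟩

theorem IsTrail.exists_boundary_dart_edge_ne {v x y : V} {c : G.Walk v v} (hc : c.IsTrail)
    {S : Set V} (hx : x ∈ c.support) (hxS : x ∈ S) (hy : y ∈ c.support) (hyS : y ∉ S)
    (e : Sym2 V) : ∃ d ∈ c.darts, d.edge ≠ e ∧ (d.fst ∈ S ↔ d.snd ∉ S) := by
  -- `c` crosses the cut in both directions, along distinct edges since it is a trail.
  obtain ⟨d₁, hd₁, hd₁S, hd₁S'⟩ := c.exists_boundary_dart_of_mem_support hx hxS hy hyS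
  obtain ⟨d₂, hd₂, hd₂S, hd₂S'⟩ :=
    c.exists_boundary_dart_of_mem_support (S := Sᶜ) hy hyS hx (not_not.mpr hxS)
  have hne : d₁.edge ≠ d₂.edge := fun h =>
    hd₂S (List.inj_on_of_nodup_map hc.edges_nodup hd₁ hd₂ h ▸ hd₁S)
  by_cases h₁ : d₁.edge = e
  · exact ⟨d₂, hd₂, h₁ ▸ hne.symm, iff_of_false hd₂S hd₂S'⟩
  · exact ⟨d₁, hd₁, h₁, iff_of_true hd₁S hd₁S'⟩

end Walk

namespace Subgraph

theorem reachable_coe_of_edges_subset {L : G.Subgraph} :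
    ∀ {u w : V} (q : G.Walk u w) (hu : u ∈ L.verts) (hw : w ∈ L.verts),
      (∀ e ∈ q.edges, e ∈ L.edgeSet) → L.coe.Reachable ⟨u, hu⟩ ⟨w, hw⟩
  | _, _, .nil, _, _, _ => .refl _
  | _, _, .cons _ q, hu, hw, hq => by
    have hadj : L.Adj _ _ := hq _ List.mem_cons_self
    exact (show L.coe.Adj ⟨_, hu⟩ ⟨_, L.edge_vert hadj.symm⟩ from hadj).reachable.trans
      (reachable_coe_of_edges_subset q _ hw fun e he => hq e (List.mem_cons_of_mem _ he))

theorem mem_verts_of_reachable_spanningCoe {L : G.Subgraph} {u w : V}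
    (h : L.spanningCoe.Reachable u w) (hne : u ≠ w) : u ∈ L.verts := by
  obtain ⟨q⟩ := h
  cases q with
  | nil => exact absurd rfl hne
  | cons hadj _ => exact L.edge_vert hadj

theorem exists_isPath_of_reachable_spanningCoe {L : G.Subgraph} {u w : V}
    (h : L.spanningCoe.Reachable u w) :
    ∃ q : G.Walk u w, q.IsPath ∧ ∀ e ∈ q.edges, e ∈ L.edgeSet := by
  obtain ⟨q, hq⟩ := h.exists_isPath
  refine ⟨q.mapLe L.spanningCoe_le, hq.mapLe _, fun e he => ?_⟩
  rw [Walk.edges_mapLe_eq_edges] at he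
  simpa only [edgeSet_spanningCoe] using q.edges_subset_edgeSet he

end Subgraph

namespace Walk.IsTrail

variable {H : G.Subgraph} {v : V} {c : G.Walk v v}

theorem reachable_ends_of_split (hc : c.IsTrail) {a x y b : V} {pre : G.Walk a x}
    {post : G.Walk y b} (hdisj : ∀ u ∈ pre.support, u ∉ post.support)
    (hpreH : ∀ u ∈ pre.support, u ∈ H.verts → u = a)
    (hpostH : ∀ u ∈ post.support, u ∈ H.verts → u = b)
    (hcE : ∀ e ∈ c.edges, e = s(x, y) ∨ e ∈ H.edgeSet ∨ e ∈ pre.edges ∨ e ∈ post.edges)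
    (hxy : s(x, y) ∈ c.edges) :
    (H ⊓ c.toSubgraph).spanningCoe.Reachable a b := by
  by_contra hab
  set K := (H ⊓ c.toSubgraph).spanningCoe
  set A : Set V := {w | ∃ u ∈ pre.support, K.Reachable u w}
  have hpostA : ∀ w ∈ post.support, w ∉ A := by
    rintro w hw ⟨u, hu, huw⟩
    have hne : u ≠ w := fun h => hdisj u hu (h ▸ hw)
    obtain rfl := hpreH u hu (Subgraph.mem_verts_of_reachable_spanningCoe huw hne).1
    obtain rfl := hpostH w hw (Subgraph.mem_verts_of_reachable_spanningCoe huw.symm hne.symm).1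
    exact hab huw
  have hclosed : ∀ u w, s(u, w) ∈ c.edges → s(u, w) ≠ s(x, y) → u ∈ A → w ∈ A := by
    rintro u w huw hne ⟨u₀, hu₀, hreach⟩
    rcases hcE _ huw with heq | hH | hpre | hpost
    · exact absurd heq hne
    · have hK : K.Adj u w := ⟨hH, adj_toSubgraph_iff_mem_edges.mpr huw⟩
      exact ⟨u₀, hu₀, hreach.trans hK.reachable⟩
    · exact ⟨w, pre.snd_mem_support_of_mem_edges hpre, .refl _⟩
    · exact absurd ⟨u₀, hu₀, hreach⟩ (hpostA u (post.fst_mem_support_of_mem_edges hpost))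
  obtain ⟨d, hd, hde, hdA⟩ :=
    hc.exists_boundary_dart_edge_ne (c.fst_mem_support_of_mem_edges hxy)
    (show x ∈ A from ⟨x, pre.end_mem_support, .refl _⟩) (c.snd_mem_support_of_mem_edges hxy)
    (hpostA y post.start_mem_support) s(x, y)
  have hdc : d.edge ∈ c.edges := List.mem_map_of_mem hd
  by_cases hfst : d.fst ∈ A
  · exact hdA.mp hfst (hclosed _ _ hdc hde hfst)
  · refine hfst (hclosed _ _ ?_ ?_ (not_not.mp (mt hdA.mpr hfst)))
    · rwa [Sym2.eq_swap]
    · rwa [Sym2.eq_swap]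

theorem reachable_ends_of_hPath (hc : c.IsTrail) {a b : V} {p : G.Walk a b} (hp : p.IsPath)
    (hint : ∀ u ∈ p.support, u ≠ a → u ≠ b → u ∉ H.verts)
    (hcE : ∀ e ∈ c.edges, e ∈ (H ⊔ p.toSubgraph).edgeSet) {e : Sym2 V} (hec : e ∈ c.edges)
    (hep : e ∈ p.edges) : (H ⊓ c.toSubgraph).spanningCoe.Reachable a b := by
  obtain ⟨x, y, pre, hxy, post, rfl, rfl⟩ := p.exists_eq_append_cons_of_mem_edges hep
  have hdisj := hp.disjoint_support_of_append_cons
  have hmem (u : V) (hu : u ∈ pre.support ∨ u ∈ post.support) :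
      u ∈ (pre.append (cons hxy post)).support := by
    simpa [support_append_cons] using hu
  refine hc.reachable_ends_of_split hdisj (fun u hu huH => ?_) (fun u hu huH => ?_)
    (fun e he => ?_) hec
  · by_contra hua
    exact hint u (hmem u (.inl hu)) hua (fun hub => hdisj u hu (hub ▸ post.end_mem_support)) huH
  · by_contra hub
    exact hint u (hmem u (.inr hu)) (fun hua => hdisj u (hua ▸ pre.start_mem_support) hu) hub huH
  · simpa [Subgraph.edgeSet_sup, edges_append_cons] using hcE e he

end Walk.IsTrail

end SimpleGraph

open SimpleGraph

theorem wide_augmentation_long_cycles_general {V : Type*} {G : SimpleGraph V}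
    (ℓ : ℕ) (H : G.Subgraph) (X : Set V) (hX : IsWide ℓ H X)
    {a b : V} (p : G.Walk a b) (hp : p.IsPath)
    (ha : a ∈ H.verts) (haX : a ∉ X) (hb : b ∈ H.verts) (hbX : b ∉ X)
    (hint : ∀ u ∈ p.support, u ≠ a → u ≠ b → u ∉ H.verts)
    (hsep : ¬ (H.deleteVerts X).coe.Reachable ⟨a, ha, haX⟩ ⟨b, hb, hbX⟩) :
    ∀ (v : V) (c : G.Walk v v), c.IsCycle →
      (∀ e ∈ c.edges, e ∈ (H ⊔ p.toSubgraph).edgeSet) →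
      (∃ e ∈ c.edges, e ∈ p.edges) → ℓ ≤ c.length := by
  rintro v c hc hcE ⟨e, hec, hep⟩
  obtain ⟨q, hq, hqE⟩ := Subgraph.exists_isPath_of_reachable_spanningCoe <|
    hc.isTrail.reachable_ends_of_hPath hp hint hcE hec hep
  have hqHc : ∀ e ∈ q.edges, e ∈ H.edgeSet ∧ e ∈ c.edges := fun e he => by
    simpa [Subgraph.edgeSet_inf] using hqE e he
  have hqc : q.length ≤ c.length :=
    hq.isTrail.length_le_of_edges_subset fun e he => (hqHc e he).2
  by_cases hqX : ∃ z ∈ X, z ∈ q.support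
  · exact (hX.2 a b q hq (fun e he => (hqHc e he).1) ⟨ha, haX⟩ ⟨hb, hbX⟩ hqX).trans hqc
  · refine (hsep <| Subgraph.reachable_coe_of_edges_subset q _ _ fun e he => ?_).elim
    exact q.mem_edgeSet_deleteVerts_of_mem_edges (fun z hz hzX => hqX ⟨z, hzX, hz⟩) he
      (hqHc e he).1

/-- If `X ⊆ V(H)` is wide and `P` is an `H`-path of `G − X` linking two distinct
components of `H − X`, then every cycle of `H ∪ P` using an edge of `P` has
length at least `ℓ`. -/
theorem wide_augmentation_long_cycles {V : Type*} [Fintype V] {G : SimpleGraph V}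
    (ℓ : ℕ) (hℓ : 1 ≤ ℓ) (H : G.Subgraph) (X : Set V) (hX : IsWide ℓ H X)
    {a b : V} (p : G.Walk a b) (hp : p.IsPath)
    (ha : a ∈ H.verts) (haX : a ∉ X) (hb : b ∈ H.verts) (hbX : b ∉ X)
    (hint : ∀ u ∈ p.support, u ≠ a → u ≠ b → u ∉ H.verts)
    (hedge : ∃ e ∈ p.edges, e ∉ H.edgeSet)
    (havoid : ∀ u ∈ p.support, u ∉ X)
    (hsep : ¬ (H.deleteVerts X).coe.Reachable ⟨a, ha, haX⟩ ⟨b, hb, hbX⟩) :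
    ∀ (v : V) (c : G.Walk v v), c.IsCycle →
      (∀ e ∈ c.edges, e ∈ (H ⊔ p.toSubgraph).edgeSet) →
      (∃ e ∈ c.edges, e ∈ p.edges) → ℓ ≤ c.length :=
  wide_augmentation_long_cycles_general ℓ H X hX p hp ha haX hb hbX hint hsep
end
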